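/- Let p ≥ 1, let g ∈ ℝ[x,y] be a nonzero homogeneous polynomial of degree p+1 written as g(x,y) = y^a · R(x,y) with a ≥ 1 and R not divisible by y, let η : ℝ² → ℝ be a smooth function with η(z) ≠ 0 for all z, and let G = (G₁,G₂) = η·(−∂g/∂y, ∂g/∂x). Let P(φ,ρ) = (ρ cos φ, ρ sin φ). Then there exists a smooth function γ₂ : ℝ → ℝ with γ₂(0) ≠ 0 such that for all φ ∈ ℝ and ρ > 0: G₁(P(φ,ρ))·cos φ + G₂(P(φ,ρ))·sin φ = η(P(φ,ρ))·ρ^p·φ^{a−1}·γ₂(φ). -/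

import Mathlib

open MvPolynomial Real


noncomputable def myc : ℕ → ℝ :=
  fun k => if 2 ∣ k then (-1 : ℝ) ^ (k / 2) / (Nat.factorial (k + 1)) else 0

lemma myc_abs (k : ℕ) : |myc k| ≤ 1 / (Nat.factorial k) := by
  unfold myc
  split_ifs with h
  · rw [abs_div, abs_pow, abs_neg, abs_one, one_pow, abs_of_nonneg (by positivity)]
    apply one_div_le_one_div_of_le (by positivity)
    exact_mod_cast Nat.factorial_le (Nat.le_succ k)
  · rw [abs_zero]; positivity

lemma summable_myc (r : ℝ) (hr : 0 ≤ r) : Summable fun k => |myc k| * r ^ k := by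
  apply Summable.of_nonneg_of_le (fun k => by positivity)
    (fun k => ?_) (Real.summable_pow_div_factorial r)
  calc |myc k| * r ^ k ≤ (1 / Nat.factorial k) * r ^ k := by
        apply mul_le_mul_of_nonneg_right (myc_abs k) (by positivity)
    _ = r ^ k / Nat.factorial k := by ring

noncomputable def sc : ℝ → ℝ := fun x => ∑' k, myc k * x ^ k

lemma summable_sc (x : ℝ) : Summable (fun k => myc k * x ^ k) := by
  apply Summable.of_abs
  apply (summable_myc |x| (abs_nonneg x)).congr
  intro k
  rw [abs_mul, abs_pow]

lemma hasSum_sc (x : ℝ) : HasSum (fun k => myc k * x ^ k) (sc x) :=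
  (summable_sc x).hasSum

lemma hasSum_sin_aux (x : ℝ) : HasSum (fun k => x * (myc k * x ^ k)) (Real.sin x) := by
  have h2 : ∀ n : ℕ, x * (myc (2 * n) * x ^ (2 * n))
      = (-1) ^ n * x ^ (2 * n + 1) / (Nat.factorial (2 * n + 1)) := by
    intro n
    unfold myc
    rw [if_pos ⟨n, rfl⟩]
    have : 2 * n / 2 = n := by omega
    rw [this]
    ring
  have hi : Function.Injective (fun n : ℕ => 2 * n) := fun m n h => by
    dsimp at h; omega
  have hz : ∀ k ∉ Set.range (fun n : ℕ => 2 * n),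
      x * (myc k * x ^ k) = 0 := by
    intro k hk
    have hodd : ¬ 2 ∣ k := by
      rintro ⟨n, rfl⟩
      exact hk ⟨n, rfl⟩
    unfold myc
    rw [if_neg hodd]
    ring
  have hfun : ((fun k => x * (myc k * x ^ k)) ∘ fun n : ℕ => 2 * n)
      = fun n : ℕ => (-1) ^ n * x ^ (2 * n + 1) / (Nat.factorial (2 * n + 1)) :=
    funext fun n => h2 n
  exact (Function.Injective.hasSum_iff hi hz).1 (by rw [hfun]; exact Real.hasSum_sin x)

lemma sin_eq_sc (x : ℝ) : Real.sin x = x * sc x := by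
  have := (hasSum_sc x).mul_left x
  exact ((hasSum_sin_aux x).unique this)

lemma sc_zero : sc 0 = 1 := by
  unfold sc
  rw [tsum_eq_single 0 (fun k hk => by simp [zero_pow hk])]
  simp [myc]

lemma contDiff_sc : ContDiff ℝ (⊤ : ℕ∞) sc := by
  have hrad : (FormalMultilinearSeries.ofScalars ℝ myc).radius = ⊤ := by
    apply FormalMultilinearSeries.radius_eq_top_of_summable_norm
    intro r
    apply ((summable_myc r r.2).congr ?_)
    intro k
    rw [FormalMultilinearSeries.ofScalars_norm, Real.norm_eq_abs]
  have hball : HasFPowerSeriesOnBall sc (FormalMultilinearSeries.ofScalars ℝ myc) 0 ⊤ := by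
    refine ⟨by rw [hrad], by simp, ?_⟩
    intro y _
    simpa only [zero_add, FormalMultilinearSeries.ofScalars_apply_eq,
      smul_eq_mul] using hasSum_sc y
  have : AnalyticOnNhd ℝ sc Set.univ := fun x _ =>
    hball.analyticAt_of_mem (by simp)
  rw [← contDiffOn_univ]
  exact this.contDiffOn uniqueDiffOn_univ

open MvPolynomial

lemma deg2 (d : Fin 2 →₀ ℕ) : (Finsupp.weight 1) d = d 0 + d 1 := by
  change (Finsupp.weight fun _ => 1) d = _
  rw [← Finsupp.degree_eq_weight_one]
  unfold Finsupp.degree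
  change ∑ i ∈ d.support, d i = _
  rw [Finset.sum_subset (Finset.subset_univ d.support)
    (fun i _ hi => Finsupp.notMem_support_iff.1 hi)]
  exact Fin.sum_univ_two d

lemma isHomog_iff (f : MvPolynomial (Fin 2) ℝ) (n : ℕ) :
    f.IsHomogeneous n ↔ ∀ d : Fin 2 →₀ ℕ, coeff d f ≠ 0 → d 0 + d 1 = n := by
  constructor
  · intro h d hd; rw [← deg2]; exact h hd
  · intro h d hd; rw [deg2]; exact h d hd

lemma eval_scale (f : MvPolynomial (Fin 2) ℝ) (n : ℕ) (hf : f.IsHomogeneous n)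
    (t x y : ℝ) : eval ![t * x, t * y] f = t ^ n * eval ![x, y] f := by
  rw [eval_eq', eval_eq', Finset.mul_sum]
  apply Finset.sum_congr rfl
  intro d hd
  have hdeg : d 0 + d 1 = n := (isHomog_iff f n).1 hf d (mem_support_iff.1 hd)
  rw [Fin.prod_univ_two, Fin.prod_univ_two]
  simp only [Matrix.cons_val_zero, Matrix.cons_val_one, Matrix.head_cons]
  rw [mul_pow, mul_pow, ← hdeg, pow_add]
  ring

lemma isHomog_pderiv {f : MvPolynomial (Fin 2) ℝ} {n : ℕ} (hf : f.IsHomogeneous (n + 1))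
    (i : Fin 2) : (pderiv i f).IsHomogeneous n := by
  conv_lhs => rw [f.as_sum]
  rw [map_sum]
  apply MvPolynomial.IsHomogeneous.sum
  intro d hd
  rw [pderiv_monomial]
  by_cases hdi : d i = 0
  · rw [hdi]; norm_num; exact isHomogeneous_zero _ _ _
  · apply isHomogeneous_monomial
    rw [Finsupp.degree_eq_weight_one, show (Finsupp.weight fun _ => (1 : ℕ) : (Fin 2 →₀ ℕ) →+ ℕ)
      = Finsupp.weight 1 from rfl, deg2]
    have h1 : d 0 + d 1 = n + 1 := (isHomog_iff f _).1 hf d (mem_support_iff.1 hd)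
    fin_cases i <;>
      simp_all only [Finsupp.tsub_apply, Finsupp.single_apply, Fin.isValue,
        Fin.mk_zero, Fin.mk_one, if_true, if_false, eq_self_iff_true] <;>
      · simp only [show ((0:Fin 2) = 1) = False by simp, show ((1:Fin 2) = 0) = False by simp,
          if_false, if_true, ite_true, ite_false]
        omega

lemma isHomog_pderiv_zero {f : MvPolynomial (Fin 2) ℝ} (hf : f.IsHomogeneous 0)
    (i : Fin 2) : pderiv i f = 0 := by
  conv_lhs => rw [f.as_sum]
  rw [map_sum]
  apply Finset.sum_eq_zero
  intro d hd
  have h1 : d 0 + d 1 = 0 := (isHomog_iff f _).1 hf d (mem_support_iff.1 hd)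
  have hdi : d i = 0 := by fin_cases i <;> simp_all only [Fin.isValue, Fin.mk_zero, Fin.mk_one] <;> omega
  rw [pderiv_monomial, hdi]
  norm_num

lemma exists_coeff_y_zero (R : MvPolynomial (Fin 2) ℝ) (hR : ¬ X 1 ∣ R) :
    ∃ d : Fin 2 →₀ ℕ, coeff d R ≠ 0 ∧ d 1 = 0 := by
  by_contra h
  push_neg at h
  apply hR
  conv_rhs => rw [R.as_sum]
  apply Finset.dvd_sum
  intro d hd
  have hd1 : d 1 ≠ 0 := h d (mem_support_iff.1 hd)
  have key : Finsupp.single 1 1 + (d - Finsupp.single 1 1) = d := by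
    ext j
    simp only [Finsupp.add_apply, Finsupp.tsub_apply, Finsupp.single_apply]
    by_cases hj : (1 : Fin 2) = j
    · subst hj; rw [if_pos rfl]; omega
    · simp only [if_neg hj]; omega
  refine ⟨monomial (d - Finsupp.single 1 1) (coeff d R), ?_⟩
  rw [X, monomial_mul, one_mul, key]

lemma homog_coeff_y_zero_eq (R : MvPolynomial (Fin 2) ℝ) (m : ℕ)
    (hhom : R.IsHomogeneous m) (d : Fin 2 →₀ ℕ) (hd : coeff d R ≠ 0) (hd1 : d 1 = 0) :
    d = Finsupp.single 0 m := by
  have h1 : d 0 + d 1 = m := (isHomog_iff R m).1 hhom d hd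
  ext j
  have hj : j = 0 ∨ j = 1 := by omega
  rcases hj with rfl | rfl <;> simp [Finsupp.single_apply] <;> omega

lemma eval_one_zero (R : MvPolynomial (Fin 2) ℝ) (m : ℕ) (hhom : R.IsHomogeneous m) :
    eval ![1, 0] R = coeff (Finsupp.single 0 m) R := by
  rw [eval_eq']
  rw [Finset.sum_eq_single (Finsupp.single 0 m)]
  · rw [Fin.prod_univ_two]
    simp [Finsupp.single_apply]
  · intro d hd hne
    have hd' := mem_support_iff.1 hd
    have hd1 : d 1 ≠ 0 := fun h0 => hne (homog_coeff_y_zero_eq R m hhom d hd' h0)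
    rw [Fin.prod_univ_two]
    simp only [Matrix.cons_val_zero, Matrix.cons_val_one, Matrix.head_cons, one_pow, one_mul]
    rw [zero_pow hd1, mul_zero]
  · intro h
    rw [notMem_support_iff.1 h, zero_mul]

lemma contDiff_eval (f : MvPolynomial (Fin 2) ℝ) (u v : ℝ → ℝ)
    (hu : ContDiff ℝ (⊤ : ℕ∞) u) (hv : ContDiff ℝ (⊤ : ℕ∞) v) :
    ContDiff ℝ (⊤ : ℕ∞) (fun t => eval ![u t, v t] f) := by
  induction f using MvPolynomial.induction_on with
  | C r => simpa using contDiff_const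
  | add f1 f2 h1 h2 => simp only [map_add]; exact h1.add h2
  | mul_X f i hf =>
    simp only [map_mul, eval_X]
    apply hf.mul
    fin_cases i
    · simpa using hu
    · simpa using hv

/-- Let `g ∈ ℝ[x,y]` be a nonzero homogeneous polynomial of degree `p+1`
(`p ≥ 1`) with `g = y^a · R`, `a ≥ 1`, `y ∤ R`; let `η` be a smooth nowhere-zero function
and `G = η·(−∂g/∂y, ∂g/∂x)`.  Then there is a smooth `γ₂ : ℝ → ℝ` with `γ₂(0) ≠ 0` such
that for all `φ` and all `ρ > 0`:
`G₁(P(φ,ρ))·cos φ + G₂(P(φ,ρ))·sin φ = η(P(φ,ρ))·ρ^p·φ^{a−1}·γ₂(φ)`. -/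
theorem polar_second_component_of_hamiltonian
    (p : ℕ) (hp : 1 ≤ p)
    (g R : MvPolynomial (Fin 2) ℝ) (hne : g ≠ 0) (hg : g.IsHomogeneous (p + 1))
    (a : ℕ) (ha : 1 ≤ a) (hfac : g = X 1 ^ a * R) (hR : ¬ (X 1 ∣ R))
    (η : ℝ × ℝ → ℝ) (hη : ContDiff ℝ (⊤ : ℕ∞) η) (hη0 : ∀ z, η z ≠ 0)
    (G₁ G₂ : ℝ × ℝ → ℝ)
    (hG₁ : ∀ z : ℝ × ℝ, G₁ z = η z * (-(eval ![z.1, z.2] (pderiv 1 g))))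
    (hG₂ : ∀ z : ℝ × ℝ, G₂ z = η z * eval ![z.1, z.2] (pderiv 0 g))
    (P : ℝ → ℝ → ℝ × ℝ)
    (hP : ∀ φ ρ : ℝ, P φ ρ = (ρ * Real.cos φ, ρ * Real.sin φ)) :
    ∃ γ₂ : ℝ → ℝ, ContDiff ℝ (⊤ : ℕ∞) γ₂ ∧ γ₂ 0 ≠ 0 ∧
      ∀ φ ρ : ℝ, 0 < ρ →
        G₁ (P φ ρ) * Real.cos φ + G₂ (P φ ρ) * Real.sin φ
          = η (P φ ρ) * ρ ^ p * φ ^ (a - 1) * γ₂ φ := by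
  
  obtain ⟨b, rfl⟩ : ∃ b, a = b + 1 := ⟨a - 1, by omega⟩
  have hR0 : R ≠ 0 := by
    intro h; apply hne; rw [hfac, h, mul_zero]
  have hcoeff : ∀ d : Fin 2 →₀ ℕ, coeff (Finsupp.single 1 (b + 1) + d) g = coeff d R := by
    intro d; rw [hfac, X_pow_eq_monomial, coeff_monomial_mul, one_mul]
  have hadd : ∀ d : Fin 2 →₀ ℕ, coeff d R ≠ 0 → (b + 1) + (d 0 + d 1) = p + 1 := by
    intro d hd
    have h2 := (isHomog_iff g _).1 hg _ (by rw [hcoeff d]; exact hd)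
    have e0 : (Finsupp.single (1 : Fin 2) (b + 1) + d) 0 = d 0 := by
      rw [Finsupp.add_apply, Finsupp.single_apply, if_neg (by decide), zero_add]
    have e1 : (Finsupp.single (1 : Fin 2) (b + 1) + d) 1 = (b + 1) + d 1 := by
      rw [Finsupp.add_apply, Finsupp.single_apply, if_pos rfl]
    rw [e0, e1] at h2
    omega
  obtain ⟨d₀, hd₀, hd₀1⟩ := exists_coeff_y_zero R hR
  have hbp : b ≤ p := by have := hadd d₀ hd₀; omega
  have hRhom : R.IsHomogeneous (p - b) := by
    rw [isHomog_iff]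
    intro d hd
    have := hadd d hd
    omega
  set S : MvPolynomial (Fin 2) ℝ :=
    X 1 ^ 2 * pderiv 0 R - ((b + 1 : ℕ) : MvPolynomial (Fin 2) ℝ) * (X 0 * R)
      - X 0 * X 1 * pderiv 1 R with hS
  have hg0 : pderiv 0 g = X 1 ^ (b + 1) * pderiv 0 R := by
    rw [hfac, pderiv_mul]
    have h0 : pderiv 0 (X 1 ^ (b + 1) : MvPolynomial (Fin 2) ℝ) = 0 := by
      rw [pderiv_pow, pderiv_X_of_ne (by decide), mul_zero]
    rw [h0, zero_mul, zero_add]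
  have hg1 : pderiv 1 g
      = ((b + 1 : ℕ) : MvPolynomial (Fin 2) ℝ) * X 1 ^ b * R + X 1 ^ (b + 1) * pderiv 1 R := by
    rw [hfac, pderiv_mul, pderiv_pow, pderiv_X_self, mul_one, Nat.add_sub_cancel]
  have hq : X 1 * pderiv 0 g - X 0 * pderiv 1 g = X 1 ^ b * S := by
    rw [hg0, hg1, hS]
    simp only [pow_succ]
    ring
  have hShom : S.IsHomogeneous (p + 1 - b) := by
    have hcast : ((b + 1 : ℕ) : MvPolynomial (Fin 2) ℝ) = C ((b + 1 : ℕ) : ℝ) :=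
      (map_natCast (C : ℝ →+* MvPolynomial (Fin 2) ℝ) (b + 1)).symm
    have t2 : (((b + 1 : ℕ) : MvPolynomial (Fin 2) ℝ) * (X 0 * R)).IsHomogeneous (p + 1 - b) := by
      rw [hcast]
      have := (isHomogeneous_C (Fin 2) ((b + 1 : ℕ) : ℝ)).mul ((isHomogeneous_X ℝ 0).mul hRhom)
      rwa [show 0 + (1 + (p - b)) = p + 1 - b by omega] at this
    by_cases hm0 : p - b = 0
    · have h0 : pderiv 0 R = 0 := isHomog_pderiv_zero (hm0 ▸ hRhom) 0
      have h1 : pderiv 1 R = 0 := isHomog_pderiv_zero (hm0 ▸ hRhom) 1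
      rw [hS, h0, h1, mul_zero, mul_zero, zero_sub, sub_zero]
      exact t2.neg
    · obtain ⟨k, hk⟩ : ∃ k, p - b = k + 1 := ⟨p - b - 1, by omega⟩
      have hpd0 : (pderiv 0 R).IsHomogeneous k := isHomog_pderiv (hk ▸ hRhom) 0
      have hpd1 : (pderiv 1 R).IsHomogeneous k := isHomog_pderiv (hk ▸ hRhom) 1
      have t1 : (X 1 ^ 2 * pderiv 0 R : MvPolynomial (Fin 2) ℝ).IsHomogeneous (p + 1 - b) := by
        have := (isHomogeneous_X_pow (R := ℝ) 1 2).mul hpd0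
        rwa [show 2 + k = p + 1 - b by omega] at this
      have t3 : (X 0 * X 1 * pderiv 1 R : MvPolynomial (Fin 2) ℝ).IsHomogeneous (p + 1 - b) := by
        have := ((isHomogeneous_X ℝ 0).mul (isHomogeneous_X ℝ 1)).mul hpd1
        rwa [show 1 + 1 + k = p + 1 - b by omega] at this
      exact (t1.sub t2).sub t3
  have hR10 : eval ![1, 0] R ≠ 0 := by
    rw [eval_one_zero R (p - b) hRhom,
      ← homog_coeff_y_zero_eq R (p - b) hRhom d₀ hd₀ hd₀1]
    exact hd₀
  have hevS : eval ![1, 0] S = -(((b + 1 : ℕ) : ℝ) * eval ![1, 0] R) := by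
    rw [hS]
    simp only [map_sub, map_mul, map_pow, eval_X, map_natCast,
      Matrix.cons_val_zero, Matrix.cons_val_one, Matrix.head_cons]
    ring
  refine ⟨fun t => sc t ^ b * eval ![Real.cos t, Real.sin t] S, ?_, ?_, ?_⟩
  · exact (contDiff_sc.pow b).mul
      (contDiff_eval S Real.cos Real.sin Real.contDiff_cos Real.contDiff_sin)
  · simp only [Real.cos_zero, Real.sin_zero, sc_zero, one_pow, one_mul, hevS]
    apply neg_ne_zero.2
    exact mul_ne_zero (by positivity) hR10
  · intro φ ρ hρ
    have hPz : P φ ρ = (ρ * Real.cos φ, ρ * Real.sin φ) := hP φ ρ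
    rw [hG₁, hG₂, hPz]
    simp only [Prod.fst, Prod.snd]
    set c := Real.cos φ with hc
    set s := Real.sin φ with hs
    set A := eval ![c, s] S with hA
    set e0 := eval ![ρ * c, ρ * s] (pderiv 0 g) with he0
    set e1 := eval ![ρ * c, ρ * s] (pderiv 1 g) with he1
    have hev : ρ * s * e0 - ρ * c * e1 = ρ ^ (p + 1) * (s ^ b * A) := by
      have h1 : ρ * s * e0 - ρ * c * e1
          = eval ![ρ * c, ρ * s] (X 1 * pderiv 0 g - X 0 * pderiv 1 g) := by
        rw [map_sub, map_mul, map_mul, eval_X, eval_X]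
        simp only [Matrix.cons_val_zero, Matrix.cons_val_one, Matrix.head_cons]
        try ring
      rw [h1, hq, map_mul, map_pow, eval_X]
      simp only [Matrix.cons_val_one, Matrix.head_cons, Matrix.cons_val_zero]
      rw [eval_scale S _ hShom ρ c s, ← hA, mul_pow,
        show ρ ^ (p + 1) = ρ ^ b * ρ ^ (p + 1 - b) by rw [← pow_add]; congr 1; omega]
      ring
    have hsin : s = φ * sc φ := sin_eq_sc φ
    have hkey : s * e0 - c * e1 = ρ ^ p * (φ ^ b * (sc φ ^ b * A)) := by
      apply mul_left_cancel₀ (ne_of_gt hρ)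
      calc ρ * (s * e0 - c * e1) = ρ * s * e0 - ρ * c * e1 := by ring
        _ = ρ ^ (p + 1) * (s ^ b * A) := hev
        _ = ρ ^ (p + 1) * ((φ * sc φ) ^ b * A) := by rw [← hsin]
        _ = ρ * (ρ ^ p * (φ ^ b * (sc φ ^ b * A))) := by rw [pow_succ, mul_pow]; ring
    have hfinal : η (ρ * c, ρ * s) * (-e1) * c + η (ρ * c, ρ * s) * e0 * s
        = η (ρ * c, ρ * s) * (s * e0 - c * e1) := by ring
    rw [hfinal, hkey, Nat.add_sub_cancel]
    ring
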